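/- Let (M, d_M) and (N, d_N) be metric spaces and n ∈ ℕ. Then e^n(M; N) ≤ e_n(M; N) + 2. Here e_n(M; N) is the smallest constant K such that for every subset A ⊆ M with |A| ≤ n, every Lipschitz map φ : A → N extends to a map Φ : M → N with Lipschitz constant at most K times that of φ; and e^n(M; N) is the smallest constant K such that for every closed subset S ⊆ M and every x₁,…,xₙ ∈ M \ S, every Lipschitz map φ : S → N extends to Φ : S ∪ {x₁,…,xₙ} → N with Lipschitz constant at most K times that of φ. -/

import Mathlib

open Set ENNReal NNReal

/-- The (possibly infinite) Lipschitz constant of `φ` restricted to `A`. -/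
noncomputable def lipConstOn {M N : Type*} [MetricSpace M] [MetricSpace N]
    (φ : M → N) (A : Set M) : ℝ≥0∞ :=
  sInf {C : ℝ≥0∞ | ∀ x ∈ A, ∀ y ∈ A, edist (φ x) (φ y) ≤ C * edist x y}

/-- `extMod M N A B` is `e(B, A; N)`: the infimum over `K ∈ [1,∞]` such that every
Lipschitz map on `A` extends to `B` with Lipschitz constant at most `K` times as large. -/
noncomputable def extMod (M N : Type*) [MetricSpace M] [MetricSpace N]
    (A B : Set M) : ℝ≥0∞ :=
  sInf {K : ℝ≥0∞ | 1 ≤ K ∧ ∀ φ : M → N, lipConstOn φ A < ⊤ →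
    ∃ Φ : M → N, (∀ a ∈ A, Φ a = φ a) ∧ lipConstOn Φ B ≤ K * lipConstOn φ A}

/-- `eFin M N n = e_n(M; N)`: the supremum of `e(M, A; N)` over `A ⊆ M` with `|A| ≤ n`. -/
noncomputable def eFin (M N : Type*) [MetricSpace M] [MetricSpace N] (n : ℕ) : ℝ≥0∞ :=
  ⨆ (A : Set M) (_ : A.encard ≤ (n : ℕ∞)), extMod M N A Set.univ

/-- `eSup M N n = e^n(M; N)`: the supremum of `e(S ∪ {x₁,…,xₙ}, S; N)` over closed
`S ⊆ M` and `x₁,…,xₙ ∈ M \ S`. -/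
noncomputable def eSup (M N : Type*) [MetricSpace M] [MetricSpace N] (n : ℕ) : ℝ≥0∞ :=
  ⨆ (S : Set M) (_ : IsClosed S) (x : Fin n → M) (_ : ∀ j, x j ∉ S),
    extMod M N S (S ∪ Set.range x)

/-! Pick points `sⱼ ∈ S` that are nearest to `xⱼ` up to a factor `1 + ε` (possible since `S` is
closed and `xⱼ ∉ S`), extend `φ|{sⱼ}` to `Ψ` on all of `M` with constant `≈ e_n · L`, and glue
`φ` on `S` with `Ψ` at the `xⱼ`. For `u ∈ S`, routing through `sⱼ` gives
`d(φ u, Ψ xⱼ) ≤ L · d(u, sⱼ) + e_n L · d(sⱼ, xⱼ)`, and `d(xⱼ, sⱼ) ≲ d(xⱼ, S) ≤ d(xⱼ, u)`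
turns this into `(1 + (1 + e_n)) L · d(u, xⱼ)`. -/

section LipschitzExtension

variable {M N : Type*} [MetricSpace M] [MetricSpace N]

lemma lipConstOn_le {φ : M → N} {A : Set M} {C : ℝ≥0∞}
    (h : ∀ x ∈ A, ∀ y ∈ A, edist (φ x) (φ y) ≤ C * edist x y) :
    lipConstOn φ A ≤ C :=
  sInf_le h

lemma edist_le_lipConstOn_mul {φ : M → N} {A : Set M} {x y : M} (hx : x ∈ A) (hy : y ∈ A) :
    edist (φ x) (φ y) ≤ lipConstOn φ A * edist x y := by
  rcases eq_or_ne x y with rfl | hne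
  · simp
  have h0 : edist x y ≠ 0 := (edist_pos.2 hne).ne'
  rw [← ENNReal.div_le_iff h0 (edist_ne_top x y)]
  exact le_sInf fun C hC => (ENNReal.div_le_iff h0 (edist_ne_top x y)).2 (hC x hx y hy)

lemma lipConstOn_mono (φ : M → N) {A B : Set M} (h : A ⊆ B) :
    lipConstOn φ A ≤ lipConstOn φ B :=
  sInf_le_sInf fun _ hC x hx y hy => hC x (h hx) y (h hy)

lemma lipConstOn_of_subsingleton (φ : M → N) {A : Set M} (hA : A.Subsingleton) :
    lipConstOn φ A = 0 :=
  nonpos_iff_eq_zero.1 <| lipConstOn_le fun x hx y hy => by simp [hA hx hy]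

lemma lipConstOn_const (c : N) (A : Set M) : lipConstOn (fun _ : M => c) A = 0 :=
  nonpos_iff_eq_zero.1 <| lipConstOn_le fun _ _ _ _ => by simp

lemma extMod_le {A B : Set M} {K : ℝ≥0∞} (hK : 1 ≤ K)
    (h : ∀ φ : M → N, lipConstOn φ A < ⊤ →
      ∃ Φ : M → N, (∀ a ∈ A, Φ a = φ a) ∧ lipConstOn Φ B ≤ K * lipConstOn φ A) :
    extMod M N A B ≤ K :=
  sInf_le ⟨hK, h⟩

lemma exists_extension_of_extMod_lt {A B : Set M} {K : ℝ≥0∞} (hK : extMod M N A B < K)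
    {φ : M → N} (hφ : lipConstOn φ A < ⊤) :
    ∃ Φ : M → N, (∀ a ∈ A, Φ a = φ a) ∧ lipConstOn Φ B ≤ K * lipConstOn φ A := by
  obtain ⟨K₀, ⟨-, hK₀⟩, hK₀K⟩ := sInf_lt_iff.1 hK
  obtain ⟨Φ, hΦφ, hΦ⟩ := hK₀ φ hφ
  exact ⟨Φ, hΦφ, hΦ.trans (by gcongr)⟩

lemma extMod_empty_le_one (B : Set M) : extMod M N ∅ B ≤ 1 := by
  refine extMod_le le_rfl fun φ _ => ?_
  rcases isEmpty_or_nonempty M with hM | ⟨⟨m⟩⟩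
  · exact ⟨φ, fun _ => False.elim,
      by simp [lipConstOn_of_subsingleton φ B.subsingleton_of_subsingleton]⟩
  · exact ⟨fun _ => φ m, fun _ => False.elim, by simp [lipConstOn_const]⟩

lemma extMod_le_eFin {A : Set M} {n : ℕ} (hA : A.encard ≤ n) :
    extMod M N A univ ≤ eFin M N n :=
  le_iSup₂ (f := fun (A : Set M) (_ : A.encard ≤ (n : ℕ∞)) => extMod M N A univ) A hA

lemma exists_edist_le_one_add_mul_infEDist {S : Set M} (hS : IsClosed S) (hSne : S.Nonempty)
    {x : M} (hx : x ∉ S) {ε : ℝ≥0∞} (hε : ε ≠ 0) :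
    ∃ s ∈ S, edist x s ≤ (1 + ε) * Metric.infEDist x S := by
  have hpos : Metric.infEDist x S ≠ 0 := mt (Metric.mem_iff_infEDist_zero_of_closed hS).2 hx
  have hfin : Metric.infEDist x S ≠ ⊤ :=
    ((Metric.infEDist_le_edist_of_mem hSne.some_mem).trans_lt (edist_lt_top _ _)).ne
  have hlt : Metric.infEDist x S < (1 + ε) * Metric.infEDist x S := by
    rw [add_mul, one_mul]
    exact ENNReal.lt_add_right hfin (mul_ne_zero hε hpos)
  obtain ⟨s, hs, hxs⟩ := Metric.infEDist_lt_iff.1 hlt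
  exact ⟨s, hs, hxs.le⟩

section Gluing

variable {S : Set M} {φ Ψ : M → N} {K ε : ℝ≥0∞}

lemma edist_le_of_edist_le_one_add_mul_infEDist {u p y : M} (hu : u ∈ S) (hp : p ∈ S)
    (hyp : edist y p ≤ (1 + ε) * Metric.infEDist y S) (hΨp : Ψ p = φ p)
    (hΨ : lipConstOn Ψ univ ≤ K * lipConstOn φ S) :
    edist (φ u) (Ψ y) ≤ (1 + (1 + K) * (1 + ε)) * lipConstOn φ S * edist u y := by
  set L := lipConstOn φ S
  have hyp' : edist y p ≤ (1 + ε) * edist u y := by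
    rw [edist_comm u y]
    exact hyp.trans (by gcongr; exact Metric.infEDist_le_edist_of_mem hu)
  have hup : edist (φ u) (φ p) ≤ L * (edist u y + edist y p) :=
    (edist_le_lipConstOn_mul hu hp).trans (by gcongr; exact edist_triangle _ _ _)
  have hpy : edist (Ψ p) (Ψ y) ≤ K * L * edist y p := by
    rw [edist_comm y p]
    exact (edist_le_lipConstOn_mul (mem_univ p) (mem_univ y)).trans (by gcongr)
  calc edist (φ u) (Ψ y)
      ≤ edist (φ u) (φ p) + edist (Ψ p) (Ψ y) := hΨp ▸ edist_triangle _ _ _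
    _ ≤ L * (edist u y + edist y p) + K * L * edist y p := add_le_add hup hpy
    _ ≤ L * (edist u y + (1 + ε) * edist u y) + K * L * ((1 + ε) * edist u y) := by
        gcongr
    _ = (1 + (1 + K) * (1 + ε)) * L * edist u y := by ring

lemma lipConstOn_piecewise_le [∀ m, Decidable (m ∈ S)] {ι : Type*} {x s : ι → M}
    (hsS : ∀ j, s j ∈ S) (hs : ∀ j, edist (x j) (s j) ≤ (1 + ε) * Metric.infEDist (x j) S)
    (hΨs : ∀ j, Ψ (s j) = φ (s j)) (hΨ : lipConstOn Ψ univ ≤ K * lipConstOn φ S) :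
    lipConstOn (S.piecewise φ Ψ) (S ∪ range x) ≤ (1 + (1 + K) * (1 + ε)) * lipConstOn φ S := by
  set C := 1 + (1 + K) * (1 + ε)
  have hφΨ : ∀ u ∈ S, ∀ j, edist (φ u) (Ψ (x j)) ≤ C * lipConstOn φ S * edist u (x j) :=
    fun u hu j => edist_le_of_edist_le_one_add_mul_infEDist hu (hsS j) (hs j) (hΨs j) hΨ
  have hKC : K ≤ C :=
    (le_mul_of_le_of_one_le (le_add_self : K ≤ 1 + K) (le_self_add : 1 ≤ 1 + ε)).trans
      le_add_self
  refine lipConstOn_le fun u hu v hv => ?_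
  by_cases huS : u ∈ S <;> by_cases hvS : v ∈ S
  · simp only [piecewise_eq_of_mem _ _ _ huS, piecewise_eq_of_mem _ _ _ hvS]
    calc edist (φ u) (φ v) ≤ lipConstOn φ S * edist u v := edist_le_lipConstOn_mul huS hvS
      _ ≤ C * lipConstOn φ S * edist u v := by
          rw [mul_assoc]; exact le_mul_of_one_le_left' le_self_add
  · obtain ⟨j, rfl⟩ := hv.resolve_left hvS
    simpa only [piecewise_eq_of_mem _ _ _ huS, piecewise_eq_of_notMem _ _ _ hvS] using hφΨ u huS j
  · obtain ⟨i, rfl⟩ := hu.resolve_left huS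
    simp only [piecewise_eq_of_notMem _ _ _ huS, piecewise_eq_of_mem _ _ _ hvS]
    rw [edist_comm, edist_comm (x i)]
    exact hφΨ v hvS i
  · simp only [piecewise_eq_of_notMem _ _ _ huS, piecewise_eq_of_notMem _ _ _ hvS]
    calc edist (Ψ u) (Ψ v) ≤ lipConstOn Ψ univ * edist u v :=
          edist_le_lipConstOn_mul (mem_univ u) (mem_univ v)
      _ ≤ C * lipConstOn φ S * edist u v := by gcongr; exact hΨ.trans (by gcongr)

lemma extMod_union_range_le (hS : IsClosed S) (hSne : S.Nonempty) {ι : Type*} {x : ι → M}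
    (hx : ∀ j, x j ∉ S) (hε : ε ≠ 0)
    (hK : ∀ s : ι → M, range s ⊆ S → extMod M N (range s) univ < K) :
    extMod M N S (S ∪ range x) ≤ 1 + (1 + K) * (1 + ε) := by
  classical
  choose s hsS hs using fun j => exists_edist_le_one_add_mul_infEDist hS hSne (hx j) hε
  have hrange : range s ⊆ S := range_subset_iff.2 hsS
  refine extMod_le le_self_add fun φ hφ => ?_
  obtain ⟨Ψ, hΨs, hΨ⟩ :=
    exists_extension_of_extMod_lt (hK s hrange) ((lipConstOn_mono φ hrange).trans_lt hφ)
  exact ⟨S.piecewise φ Ψ, fun a ha => piecewise_eq_of_mem _ _ _ ha,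
    lipConstOn_piecewise_le hsS hs (fun j => hΨs _ (mem_range_self j))
      (hΨ.trans (by gcongr; exact lipConstOn_mono φ hrange))⟩

end Gluing

end LipschitzExtension

lemma ENNReal.exists_ne_zero_one_add_mul_one_add_le {K δ : ℝ≥0∞} (hK : K ≠ ⊤) (hδ : δ ≠ 0) :
    ∃ ε ≠ 0, (1 + K) * (1 + ε) ≤ 1 + K + δ :=
  ⟨δ / (1 + K), (ENNReal.div_pos hδ (by simp [hK])).ne',
    by rw [mul_add, mul_one, ENNReal.mul_div_cancel (by simp) (by simp [hK])]⟩

/-- `e^n(M; N) ≤ e_n(M; N) + 2`. -/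
theorem eSup_le_eFin_add_two (M N : Type*) [MetricSpace M] [MetricSpace N] (n : ℕ) :
    eSup M N n ≤ eFin M N n + 2 := by
  refine iSup₂_le fun S hS => iSup₂_le fun x hx => ?_
  rcases S.eq_empty_or_nonempty with rfl | hSne
  · exact (extMod_empty_le_one _).trans (one_le_two.trans le_add_self)
  refine ENNReal.le_of_forall_pos_le_add fun δ hδ hfin => ?_
  have hE : eFin M N n ≠ ⊤ := (le_self_add.trans_lt hfin).ne
  have hδ2 : (δ / 2 : ℝ≥0∞) ≠ 0 := by simp [hδ.ne']
  set K := eFin M N n + (δ / 2 : ℝ≥0∞)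
  have hsK : ∀ s : Fin n → M, extMod M N (range s) univ < K := fun s =>
    (extMod_le_eFin (by simpa [image_univ] using encard_image_le s univ)).trans_lt
      (ENNReal.lt_add_right hE hδ2)
  obtain ⟨ε, hε, hεK⟩ := ENNReal.exists_ne_zero_one_add_mul_one_add_le
    (ENNReal.add_ne_top.2 ⟨hE, ENNReal.div_ne_top coe_ne_top two_ne_zero⟩) hδ2
  calc extMod M N S (S ∪ range x) ≤ 1 + (1 + K) * (1 + ε) :=
        extMod_union_range_le hS hSne hx hε fun s _ => hsK s
    _ ≤ 1 + (1 + K + δ / 2) := by gcongr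
    _ = eFin M N n + 2 + (δ / 2 + δ / 2) := by simp only [K]; ring
    _ = eFin M N n + 2 + δ := by rw [ENNReal.add_halves]
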